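/- If x is a Daugavet point in a Banach space X, then for every slice S of B_X and every ε > 0, there exists y ∈ S with ‖x+y‖ ≥ 2-ε and ‖x-y‖ ≥ 2-ε. -/

import Mathlib

open scoped ENNReal

variable {X : Type*} [NormedAddCommGroup X] [NormedSpace ℝ X]

/-- The ballSlice of the closed unit ball of `X` determined by the functional `f` and `α`:
`S(f, α) = {y ∈ B_X : f y > 1 - α}`. -/
def ballSlice (f : X →L[ℝ] ℝ) (α : ℝ) : Set X := {y | ‖y‖ ≤ 1 ∧ 1 - α < f y}

/-- `x` is a Daugavet point: `sup_{y ∈ S} ‖x - y‖ = 2` for every ballSlice `S` of `B_X`. -/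
def IsDaugavetPoint (x : X) : Prop :=
  ‖x‖ = 1 ∧ ∀ (f : X →L[ℝ] ℝ) (α : ℝ), ‖f‖ = 1 → 0 < α →
    ∀ ε > (0 : ℝ), ∃ y ∈ ballSlice f α, 2 - ε < ‖x - y‖

/-- `x` is a `∇`-point: `sup_{y ∈ S} ‖x - y‖ = 2` for every ballSlice `S` of `B_X`
not containing `x`. -/
def IsNablaPoint (x : X) : Prop :=
  ‖x‖ = 1 ∧ ∀ (f : X →L[ℝ] ℝ) (α : ℝ), ‖f‖ = 1 → 0 < α → x ∉ ballSlice f α →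
    ∀ ε > (0 : ℝ), ∃ y ∈ ballSlice f α, 2 - ε < ‖x - y‖

/-- `x` is a `𝔇`-point: `sup_{y ∈ S(f,α)} ‖x - y‖ = 2` for every norm-one functional `f`
supporting `x` (i.e. `f x = 1`) and every `α > 0`. -/
def IsDPoint (x : X) : Prop :=
  ‖x‖ = 1 ∧ ∀ (f : X →L[ℝ] ℝ) (α : ℝ), ‖f‖ = 1 → f x = 1 → 0 < α →
    ∀ ε > (0 : ℝ), ∃ y ∈ ballSlice f α, 2 - ε < ‖x - y‖

/-- `x` is a denting point of `B_X`: it belongs to slices of arbitrarily small diameter. -/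
def IsDentingPoint (x : X) : Prop :=
  ‖x‖ ≤ 1 ∧ ∀ ε > (0 : ℝ), ∃ (f : X →L[ℝ] ℝ) (α : ℝ), ‖f‖ = 1 ∧ 0 < α ∧
    x ∈ ballSlice f α ∧ ∀ y ∈ ballSlice f α, ∀ z ∈ ballSlice f α, ‖y - z‖ < ε

/-- `x` is a strongly exposed point of `B_X`: some norm-one functional `f` with `f x = 1`
generates slices containing `x` of arbitrarily small diameter. -/
def IsStronglyExposedPoint (x : X) : Prop :=
  ‖x‖ = 1 ∧ ∃ f : X →L[ℝ] ℝ, ‖f‖ = 1 ∧ f x = 1 ∧ ∀ ε > (0 : ℝ), ∃ α > (0 : ℝ),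
    ∀ y ∈ ballSlice f α, ∀ z ∈ ballSlice f α, ‖y - z‖ < ε

/-!
Pick `y₁` in the slice with `‖x + y₁‖ ≈ 2` (the Daugavet condition for the slice of `-f`, applied
to `-y₁`) and a norm-one `g` attaining the norm of `x + y₁`; then `g x ≈ 1` and `g y₁ ≈ 1`. The
point `y₁` lies in both slices of `f` and of `g`, so the normalized slice of `f + g` sits inside
both. Applying the Daugavet condition to that slice gives `y` with `‖x - y‖ ≈ 2`, while
`‖x + y‖ ≥ g x + g y ≈ 2`.
-/

section BallSlice

variable {f g : X →L[ℝ] ℝ} {α δ : ℝ} {y : X}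

theorem ballSlice_mono {β : ℝ} (h : α ≤ β) : ballSlice f α ⊆ ballSlice f β :=
  fun _ ⟨hy, hfy⟩ => ⟨hy, by linarith⟩

theorem mem_ballSlice_neg : y ∈ ballSlice (-f) α ↔ -y ∈ ballSlice f α := by
  simp [ballSlice]

theorem apply_le_norm_of_opNorm_le_one (hf : ‖f‖ ≤ 1) (v : X) : f v ≤ ‖v‖ :=
  (le_abs_self _).trans ((f.le_of_opNorm_le hf v).trans_eq (one_mul _))

theorem apply_le_one_of_opNorm_le_one (hf : ‖f‖ ≤ 1) (hy : ‖y‖ ≤ 1) : f y ≤ 1 :=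
  (apply_le_norm_of_opNorm_le_one hf y).trans hy

theorem mem_ballSlice_of_sub_lt_apply_add {a b : X} (hg : ‖g‖ ≤ 1) (ha : ‖a‖ ≤ 1)
    (hb : ‖b‖ ≤ 1) (h : 2 - δ < g (a + b)) : a ∈ ballSlice g δ := by
  rw [map_add] at h
  exact ⟨ha, by linarith [apply_le_one_of_opNorm_le_one hg hb]⟩

theorem two_sub_lt_norm_add_of_mem_inter (hy : y ∈ ballSlice f δ ∩ ballSlice g δ) :
    2 - 2 * δ < ‖f + g‖ :=
  calc 2 - 2 * δ < (f + g) y := by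
        rw [add_apply]; linarith [hy.1.2, hy.2.2]
    _ ≤ ‖(f + g) y‖ := le_abs_self _
    _ ≤ ‖f + g‖ * ‖y‖ := (f + g).le_opNorm y
    _ ≤ ‖f + g‖ := mul_le_of_le_one_right (norm_nonneg _) hy.1.1

/-- Two slices that meet need not contain a common slice, but slightly larger ones do: the
normalized slice of `f + g`. -/
theorem ballSlice_inv_norm_smul_add_subset {y₁ : X} (hf : ‖f‖ ≤ 1) (hg : ‖g‖ ≤ 1)
    (hy₁ : y₁ ∈ ballSlice f δ ∩ ballSlice g δ) :
    ballSlice (‖f + g‖⁻¹ • (f + g)) δ ⊆ ballSlice f (4 * δ) ∩ ballSlice g (4 * δ) := by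
  rintro y ⟨hy, hφy⟩
  set h := f + g
  have hδ : 0 ≤ δ := by linarith [hy₁.1.2, apply_le_one_of_opNorm_le_one hf hy₁.1.1]
  have hh_lower := two_sub_lt_norm_add_of_mem_inter hy₁
  have hh_upper : ‖h‖ ≤ 2 := (norm_add_le f g).trans (by linarith)
  have hhy_eq : h y = ‖h‖ * (‖h‖⁻¹ * h y) := by
    rcases eq_or_ne ‖h‖ 0 with h0 | h0
    · simp [norm_eq_zero.mp h0]
    · rw [mul_inv_cancel_left₀ h0]
  rw [smul_apply, smul_eq_mul] at hφy
  have hhy : 2 - 4 * δ < h y :=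
    calc 2 - 4 * δ < ‖h‖ * (1 - δ) := by nlinarith
      _ ≤ ‖h‖ * (‖h‖⁻¹ * h y) := mul_le_mul_of_nonneg_left hφy.le (norm_nonneg h)
      _ = h y := hhy_eq.symm
  rw [add_apply] at hhy
  have hfy := apply_le_one_of_opNorm_le_one hf hy
  have hgy := apply_le_one_of_opNorm_le_one hg hy
  exact ⟨⟨hy, by linarith⟩, ⟨hy, by linarith⟩⟩

end BallSlice

theorem IsDaugavetPoint.exists_mem_ballSlice_lt_norm_add {x : X} (hx : IsDaugavetPoint x)
    {f : X →L[ℝ] ℝ} {α : ℝ} (hf : ‖f‖ = 1) (hα : 0 < α) {ε : ℝ} (hε : 0 < ε) :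
    ∃ y ∈ ballSlice f α, 2 - ε < ‖x + y‖ := by
  obtain ⟨z, hz, hxz⟩ := hx.2 (-f) α (by rwa [norm_neg]) hα ε hε
  exact ⟨-z, mem_ballSlice_neg.mp hz, by rwa [← sub_eq_add_neg]⟩

theorem IsDaugavetPoint.exists_symmetric_general
    {X : Type*} [NormedAddCommGroup X] [NormedSpace ℝ X]
    {x : X} (hx : IsDaugavetPoint x) (f : X →L[ℝ] ℝ) (α : ℝ) (hf : ‖f‖ = 1) (hα : 0 < α)
    {ε : ℝ} (hε : 0 < ε) :
    ∃ y ∈ ballSlice f α, 2 - ε ≤ ‖x + y‖ ∧ 2 - ε ≤ ‖x - y‖ := by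
  set δ := min (min α ε) 1 / 5 with hδ_def
  have hδ : 0 < δ := by positivity
  have hδα : 4 * δ ≤ α := by linarith [min_le_left (min α ε) 1, min_le_left α ε, hδ_def]
  have hδε : 5 * δ ≤ ε := by linarith [min_le_left (min α ε) 1, min_le_right α ε, hδ_def]
  have hδ1 : δ < 1 := by linarith [min_le_right (min α ε) 1, hδ_def]
  obtain ⟨y₁, hy₁, hxy₁⟩ := hx.exists_mem_ballSlice_lt_norm_add hf hδ hδ
  obtain ⟨g, hg, hgxy₁⟩ := exists_dual_vector ℝ (x + y₁) (by linarith)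
  have hgxy₁' : 2 - δ < g (x + y₁) := by rw [hgxy₁]; exact hxy₁
  have hgx := mem_ballSlice_of_sub_lt_apply_add hg.le hx.1.le hy₁.1 hgxy₁'
  have hgy₁ := mem_ballSlice_of_sub_lt_apply_add hg.le hy₁.1 hx.1.le (by rwa [add_comm])
  have hfg : f + g ≠ 0 := norm_pos_iff.mp <| by
    linarith [two_sub_lt_norm_add_of_mem_inter ⟨hy₁, hgy₁⟩]
  obtain ⟨y, hy, hxy⟩ := hx.2 _ δ (norm_smul_inv_norm (𝕜 := ℝ) hfg) hδ ε hε
  obtain ⟨hfy, hgy⟩ := ballSlice_inv_norm_smul_add_subset hf.le hg.le ⟨hy₁, hgy₁⟩ hy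
  refine ⟨y, ballSlice_mono hδα hfy, ?_, hxy.le⟩
  calc 2 - ε ≤ g x + g y := by linarith [hgx.2, hgy.2]
    _ = g (x + y) := (map_add g x y).symm
    _ ≤ ‖x + y‖ := apply_le_norm_of_opNorm_le_one hg.le _

/-- If `x` is a Daugavet point, then for every slice `S` of `B_X` and every `ε > 0` there is
`y ∈ S` with `‖x + y‖ ≥ 2 - ε` and `‖x - y‖ ≥ 2 - ε`. -/
theorem IsDaugavetPoint.exists_symmetric
    {X : Type*} [NormedAddCommGroup X] [NormedSpace ℝ X] [CompleteSpace X]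
    {x : X} (hx : IsDaugavetPoint x) (f : X →L[ℝ] ℝ) (α : ℝ) (hf : ‖f‖ = 1) (hα : 0 < α)
    {ε : ℝ} (hε : 0 < ε) :
    ∃ y ∈ ballSlice f α, 2 - ε ≤ ‖x + y‖ ∧ 2 - ε ≤ ‖x - y‖ :=
  IsDaugavetPoint.exists_symmetric_general hx f α hf hα hε
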